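/- arXiv:2212.02344 — 14 statements merged into one kernel-verified Lean document; each statement's English description precedes it below -/
import Mathlib

section
/- Let f, g : ℝ≥0 → ℝ≥0 satisfy ∀ x y ≥ 0, g(y) − g(x) ≥ x·(f(y) − f(x)). Then f is monotonically non-decreasing on [0, ∞), i.e., 0 ≤ x ≤ y implies f(x) ≤ f(y). -/
/-- the incentive inequality implies that `f` is monotone on `[0, ∞)`. -/
theorem monotone_of_incentive (f g : ℝ → ℝ)
    (hf : ∀ x ≥ (0:ℝ), 0 ≤ f x) (hg : ∀ x ≥ (0:ℝ), 0 ≤ g x)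
    (h : ∀ x ≥ (0:ℝ), ∀ y ≥ (0:ℝ), g y - g x ≥ x * (f y - f x)) :
    ∀ x y : ℝ, 0 ≤ x → x ≤ y → f x ≤ f y := by
  intro x y hx hxy
  have hy : (0:ℝ) ≤ y := le_trans hx hxy
  rcases eq_or_lt_of_le hxy with rfl | hlt
  · exact le_refl _
  · have h1 := h x hx y hy
    have h2 := h y hy x hx
    nlinarith
end

section
/- Let f : ℝ≥0 → ℝ≥0 be monotonically non-decreasing, let C be a constant, and define g(x) = C + x·f(x) − ∫₀ˣ f(z) dz. Then for all x, y ≥ 0, g(y) − g(x) ≥ x·(f(y) − f(x)). -/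
lemma mono_on_nonneg_intable (f : ℝ → ℝ)
    (hmono : ∀ x y : ℝ, 0 ≤ x → x ≤ y → f x ≤ f y) {a b : ℝ}
    (ha : 0 ≤ a) (hb : 0 ≤ b) : IntervalIntegrable f MeasureTheory.volume a b := by
  apply MonotoneOn.intervalIntegrable
  intro u hu v hv huv
  exact hmono u v (le_trans (le_min ha hb) hu.1) huv

/-- for monotone `f`, `g(x) = C + x·f(x) − ∫₀ˣ f` satisfies the incentive
inequality. -/
theorem incentive_of_payment_formula (f g : ℝ → ℝ) (C : ℝ)
    (hf : ∀ x ≥ (0:ℝ), 0 ≤ f x)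
    (hmono : ∀ x y : ℝ, 0 ≤ x → x ≤ y → f x ≤ f y)
    (hg : ∀ x ≥ (0:ℝ), g x = C + x * f x - ∫ z in (0:ℝ)..x, f z) :
    ∀ x ≥ (0:ℝ), ∀ y ≥ (0:ℝ), g y - g x ≥ x * (f y - f x) := by
  intro x hx y hy
  rw [hg x hx, hg y hy]
  have hsplit : (∫ z in (0:ℝ)..y, f z) - (∫ z in (0:ℝ)..x, f z) = ∫ z in x..y, f z := by
    rw [intervalIntegral.integral_interval_sub_left
      (mono_on_nonneg_intable f hmono le_rfl hy) (mono_on_nonneg_intable f hmono le_rfl hx)]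
  have hintxy := mono_on_nonneg_intable f hmono hx hy
  have hkey : (∫ z in x..y, f z) ≤ y * f y - x * f y := by
    rcases le_total x y with h | h
    · have : (∫ z in x..y, f z) ≤ ∫ _ in x..y, f y := by
        apply intervalIntegral.integral_mono_on h hintxy intervalIntegrable_const
        intro u hu
        exact hmono u y (le_trans hx hu.1) hu.2
      rw [intervalIntegral.integral_const, smul_eq_mul] at this
      linarith [this]
    · rw [intervalIntegral.integral_symm]
      have : (∫ _ in y..x, f y) ≤ ∫ z in y..x, f z := by
        apply intervalIntegral.integral_mono_on h intervalIntegrable_const hintxy.symm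
        intro u hu
        exact hmono y u hy hu.1
      rw [intervalIntegral.integral_const, smul_eq_mul] at this
      linarith [this]
  have := hsplit
  nlinarith [hkey, hsplit]
end

section
/- Let f, g : ℝ≥0 → ℝ≥0 satisfy ∀ x y ≥ 0, g(y) − g(x) ≥ x·(f(y) − f(x)), and suppose f is differentiable at a point x ≥ 0. Then g is differentiable at x and g′(x) = x·f′(x). -/
/-- if the incentive inequality holds and `f` is differentiable at `x ≥ 0`
(right differentiable at `0`, i.e. within `[0, ∞)`), then `g` is differentiable at `x`
with derivative `x·f'(x)`. -/
theorem deriv_of_incentive (f g : ℝ → ℝ)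
    (hf : ∀ x ≥ (0:ℝ), 0 ≤ f x) (hg : ∀ x ≥ (0:ℝ), 0 ≤ g x)
    (h : ∀ x ≥ (0:ℝ), ∀ y ≥ (0:ℝ), g y - g x ≥ x * (f y - f x))
    (x : ℝ) (hx : 0 ≤ x) (d : ℝ)
    (hfd : HasDerivWithinAt f d (Set.Ici 0) x) :
    HasDerivWithinAt g (x * d) (Set.Ici 0) x := by
  have hc : ContinuousWithinAt f (Set.Ici 0) x := hfd.continuousWithinAt
  have h1 := hasDerivWithinAt_iff_isLittleO.mp hfd
  rw [hasDerivWithinAt_iff_isLittleO]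
  have h1' : (fun y => x * (f y - f x - (y - x) * d)) =o[nhdsWithin x (Set.Ici 0)]
      fun y => y - x := by
    simpa using h1.const_mul_left x
  have hsmall : (fun y => f y - f x) =o[nhdsWithin x (Set.Ici 0)] fun _ => (1:ℝ) := by
    rw [Asymptotics.isLittleO_one_iff]
    simpa using hc.tendsto.sub (tendsto_const_nhds (x := f x))
  have ho : (fun y => (y - x) * (f y - f x)) =o[nhdsWithin x (Set.Ici 0)]
      fun y => y - x := by
    simpa using (Asymptotics.isBigO_refl (fun y => y - x) (nhdsWithin x (Set.Ici 0))).mul_isLittleO hsmall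
  have h2 : (fun y => g y - g x - x * (f y - f x)) =o[nhdsWithin x (Set.Ici 0)]
      fun y => y - x := by
    refine (Asymptotics.IsBigO.of_bound 1 ?_).trans_isLittleO ho
    filter_upwards [self_mem_nhdsWithin] with y hy
    have hy' : (0:ℝ) ≤ y := hy
    have hA1 := h x hx y hy'
    have hA2 := h y hy' x hx
    have h0 : 0 ≤ g y - g x - x * (f y - f x) := by linarith
    have hle : g y - g x - x * (f y - f x) ≤ (y - x) * (f y - f x) := by nlinarith
    rw [Real.norm_eq_abs, Real.norm_eq_abs, abs_of_nonneg h0, one_mul]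
    exact hle.trans (le_abs_self _)
  have := h2.add h1'
  refine this.congr' ?_ (by rfl)
  filter_upwards with y
  simp only [smul_eq_mul]
  ring
end

section
/- Let f : ℝ≥0 → ℝ≥0 be differentiable at every point of [0, ∞) (right differentiable at 0). If g₁ and g₂ both satisfy ∀ x y ≥ 0, gᵢ(y) − gᵢ(x) ≥ x·(f(y) − f(x)), then g₁ − g₂ is a constant function on [0, ∞). -/
/-- Key quantitative bound: the difference of two solutions is controlled by the
increment of `f`. -/
lemma key_bound (f g₁ g₂ : ℝ → ℝ)
    (h₁ : ∀ x ≥ (0:ℝ), ∀ y ≥ (0:ℝ), g₁ y - g₁ x ≥ x * (f y - f x))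
    (h₂ : ∀ x ≥ (0:ℝ), ∀ y ≥ (0:ℝ), g₂ y - g₂ x ≥ x * (f y - f x))
    {x y : ℝ} (hx : 0 ≤ x) (hy : 0 ≤ y) :
    |(g₁ y - g₂ y) - (g₁ x - g₂ x)| ≤ |y - x| * |f y - f x| := by
  -- reduce to the case x ≤ y
  wlog hxy : x ≤ y with H
  · have := H f g₂ g₁ h₂ h₁ hy hx (le_of_not_ge hxy)
    calc |(g₁ y - g₂ y) - (g₁ x - g₂ x)|
        = |(g₁ x - g₂ x) - (g₁ y - g₂ y)| := abs_sub_comm _ _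
      _ = |(g₂ x - g₁ x) - (g₂ y - g₁ y)| := by rw [← abs_neg]; ring_nf
      _ ≤ |x - y| * |f x - f y| := this
      _ = |y - x| * |f y - f x| := by rw [abs_sub_comm x y, abs_sub_comm (f x) (f y)]
  have a1 := h₁ x hx y hy
  have a2 := h₁ y hy x hx
  have b1 := h₂ x hx y hy
  have b2 := h₂ y hy x hx
  -- f y - f x ≥ 0 when (y - x) * (f y - f x) ≥ 0
  have hΔ : 0 ≤ (y - x) * (f y - f x) := by nlinarith
  have hfyx : 0 ≤ f y - f x := by
    rcases eq_or_lt_of_le hxy with h | h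
    · simp [h]
    · nlinarith
  rw [abs_of_nonneg (sub_nonneg.2 hxy), abs_of_nonneg hfyx, abs_le]
  constructor <;> nlinarith

/-- if `f` is differentiable at every point of `[0, ∞)` (right differentiable
at `0`), then any two solutions of the incentive inequality differ by a constant. -/
theorem solutions_differ_by_constant_of_differentiable (f g₁ g₂ : ℝ → ℝ)
    (hf : ∀ x ≥ (0:ℝ), 0 ≤ f x)
    (hg₁ : ∀ x ≥ (0:ℝ), 0 ≤ g₁ x) (hg₂ : ∀ x ≥ (0:ℝ), 0 ≤ g₂ x)
    (hfd : ∀ x ≥ (0:ℝ), DifferentiableWithinAt ℝ f (Set.Ici 0) x)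
    (h₁ : ∀ x ≥ (0:ℝ), ∀ y ≥ (0:ℝ), g₁ y - g₁ x ≥ x * (f y - f x))
    (h₂ : ∀ x ≥ (0:ℝ), ∀ y ≥ (0:ℝ), g₂ y - g₂ x ≥ x * (f y - f x)) :
    ∃ C : ℝ, ∀ x ≥ (0:ℝ), g₁ x - g₂ x = C := by
  set h : ℝ → ℝ := fun x => g₁ x - g₂ x with hh
  have hderiv : ∀ x ∈ Set.Ici (0:ℝ), HasDerivWithinAt h 0 (Set.Ici 0) x := by
    intro x hx
    rw [hasDerivWithinAt_iff_isLittleO]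
    rw [Asymptotics.isLittleO_iff]
    intro c hc
    have hcont : Filter.Tendsto f (nhdsWithin x (Set.Ici 0)) (nhds (f x)) :=
      (hfd x hx).continuousWithinAt
    have hev : ∀ᶠ y in nhdsWithin x (Set.Ici 0), |f y - f x| ≤ c := by
      have := hcont (Metric.closedBall_mem_nhds (f x) hc)
      filter_upwards [this] with y hy
      simpa [Real.dist_eq] using hy
    filter_upwards [hev, self_mem_nhdsWithin] with y hfy (hy : (0:ℝ) ≤ y)
    have hb := key_bound f g₁ g₂ h₁ h₂ hx hy
    simp only [smul_zero, sub_zero, Real.norm_eq_abs]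
    calc |h y - h x| ≤ |y - x| * |f y - f x| := hb
      _ ≤ |y - x| * c := by
          exact mul_le_mul_of_nonneg_left hfy (abs_nonneg _)
      _ = c * |y - x| := mul_comm _ _
  refine ⟨h 0, fun x hx => ?_⟩
  have := Convex.norm_image_sub_le_of_norm_hasDerivWithin_le
    (fun y hy => hderiv y hy) (C := 0) (fun y hy => by simp) (convex_Ici 0)
    (Set.self_mem_Ici) (hx : x ∈ Set.Ici 0)
  simp only [zero_mul, Real.norm_eq_abs] at this
  have : h x = h 0 := by
    have := abs_nonpos_iff.mp (le_trans this (le_refl 0))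
    linarith [sub_eq_zero.mp this]
  exact this
end

section
/- Let f, g₁, g₂ : ℝ≥0 → ℝ≥0 with both g₁ and g₂ satisfying ∀ x y ≥ 0, gᵢ(y) − gᵢ(x) ≥ x·(f(y) − f(x)). Then the function G = g₁ − g₂ is continuous on [0, ∞) (right continuous at 0), with no assumption on f. -/
/-- the difference of two solutions of the incentive inequality is continuous
on `[0, ∞)` (right continuous at `0`), with no assumption on `f`. -/
theorem diff_of_solutions_continuous (f g₁ g₂ : ℝ → ℝ)
    (hf : ∀ x ≥ (0:ℝ), 0 ≤ f x)
    (hg₁ : ∀ x ≥ (0:ℝ), 0 ≤ g₁ x) (hg₂ : ∀ x ≥ (0:ℝ), 0 ≤ g₂ x)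
    (h₁ : ∀ x ≥ (0:ℝ), ∀ y ≥ (0:ℝ), g₁ y - g₁ x ≥ x * (f y - f x))
    (h₂ : ∀ x ≥ (0:ℝ), ∀ y ≥ (0:ℝ), g₂ y - g₂ x ≥ x * (f y - f x)) :
    ContinuousOn (fun x => g₁ x - g₂ x) (Set.Ici 0) := by
  -- f is monotone on [0,∞)
  have mono : ∀ x ≥ (0:ℝ), ∀ y, x ≤ y → f x ≤ f y := by
    intro x hx y hxy
    have hy : (0:ℝ) ≤ y := le_trans hx hxy
    have A := h₁ x hx y hy
    have B := h₁ y hy x hx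
    rcases eq_or_lt_of_le hxy with h | h
    · simp [h]
    · nlinarith
  -- key Lipschitz-type bound
  have key : ∀ x ≥ (0:ℝ), ∀ y ≥ (0:ℝ),
      |(g₁ y - g₂ y) - (g₁ x - g₂ x)| ≤ |y - x| * |f y - f x| := by
    intro x hx y hy
    have A := h₁ x hx y hy
    have B := h₂ y hy x hx
    have A' := h₁ y hy x hx
    have B' := h₂ x hx y hy
    rw [abs_le]
    constructor
    · nlinarith [neg_abs_le (y - x), le_abs_self (y - x),
        neg_abs_le (f y - f x), le_abs_self (f y - f x), abs_nonneg (y - x),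
        abs_nonneg (f y - f x)]
    · nlinarith [neg_abs_le (y - x), le_abs_self (y - x),
        neg_abs_le (f y - f x), le_abs_self (f y - f x), abs_nonneg (y - x),
        abs_nonneg (f y - f x)]
  intro a ha
  rw [Metric.continuousWithinAt_iff]
  intro ε hε
  have ha' : (0:ℝ) ≤ a := ha
  set C : ℝ := f (a + 1) + 1 with hC
  have hC0 : 0 < C := by
    have := hf (a + 1) (by linarith)
    linarith
  refine ⟨min 1 (ε / C), lt_min one_pos (div_pos hε hC0), ?_⟩
  intro y hy hdy
  have hy' : (0:ℝ) ≤ y := hy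
  rw [Real.dist_eq] at hdy ⊢
  have hd1 : |y - a| < 1 := lt_of_lt_of_le hdy (min_le_left _ _)
  have hd2 : |y - a| < ε / C := lt_of_lt_of_le hdy (min_le_right _ _)
  have hya : y ≤ a + 1 := by
    have := le_abs_self (y - a); linarith
  -- bound |f y - f a| ≤ C
  have hfb : |f y - f a| ≤ C := by
    have h1 := mono y hy' (a + 1) hya
    have h2 := mono a ha' (a + 1) (by linarith)
    have h3 := hf y hy'
    have h4 := hf a ha'
    rw [abs_le]; constructor <;> nlinarith
  have hk := key a ha' y hy'
  calc |(g₁ y - g₂ y) - (g₁ a - g₂ a)| ≤ |y - a| * |f y - f a| := hk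
    _ ≤ |y - a| * C := mul_le_mul_of_nonneg_left hfb (abs_nonneg _)
    _ < (ε / C) * C := by
        apply mul_lt_mul_of_pos_right hd2 hC0
    _ = ε := div_mul_cancel₀ ε (ne_of_gt hC0)
end

section
/- Let f, g₁, g₂ : ℝ≥0 → ℝ≥0 with both g₁ and g₂ satisfying ∀ x y ≥ 0, gᵢ(y) − gᵢ(x) ≥ x·(f(y) − f(x)), and let G = g₁ − g₂. If f is continuous at a point x ≥ 0, then G is differentiable at x and G′(x) = 0. -/
open Topology Filter


/-- if `f` is continuous at `x ≥ 0` (right continuous at `0`), then the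
difference `G = g₁ − g₂` of two solutions is differentiable at `x` with `G'(x) = 0`. -/
theorem diff_of_solutions_deriv_zero (f g₁ g₂ : ℝ → ℝ)
    (hf : ∀ x ≥ (0:ℝ), 0 ≤ f x)
    (hg₁ : ∀ x ≥ (0:ℝ), 0 ≤ g₁ x) (hg₂ : ∀ x ≥ (0:ℝ), 0 ≤ g₂ x)
    (h₁ : ∀ x ≥ (0:ℝ), ∀ y ≥ (0:ℝ), g₁ y - g₁ x ≥ x * (f y - f x))
    (h₂ : ∀ x ≥ (0:ℝ), ∀ y ≥ (0:ℝ), g₂ y - g₂ x ≥ x * (f y - f x))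
    (x : ℝ) (hx : 0 ≤ x)
    (hfc : ContinuousWithinAt f (Set.Ici 0) x) :
    HasDerivWithinAt (fun z => g₁ z - g₂ z) 0 (Set.Ici 0) x := by
  rw [hasDerivWithinAt_iff_tendsto_slope]
  set G : ℝ → ℝ := fun z => g₁ z - g₂ z with hG
  have hle : 𝓝[Set.Ici (0:ℝ) \ {x}] x ≤ 𝓝[Set.Ici (0:ℝ)] x :=
    nhdsWithin_mono _ Set.diff_subset
  have hft : Filter.Tendsto (fun y => |f y - f x|) (𝓝[Set.Ici (0:ℝ) \ {x}] x) (𝓝 0) := by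
    have h1 : Filter.Tendsto f (𝓝[Set.Ici (0:ℝ) \ {x}] x) (𝓝 (f x)) := hfc.mono_left hle
    have h2 : Filter.Tendsto (fun y => f y - f x) (𝓝[Set.Ici (0:ℝ) \ {x}] x) (𝓝 0) := by
      simpa using h1.sub (tendsto_const_nhds (x := f x))
    simpa using h2.abs
  refine squeeze_zero_norm' ?_ hft
  filter_upwards [self_mem_nhdsWithin] with y hy
  obtain ⟨hy0, hyx⟩ := hy
  have hyx' : y ≠ x := hyx
  have hy0 : (0:ℝ) ≤ y := hy0
  have A := h₁ x hx y hy0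
  have B := h₂ y hy0 x hx
  have C := h₁ y hy0 x hx
  have D := h₂ x hx y hy0
  have hlow : (x - y) * (f y - f x) ≤ G y - G x := by simp only [hG]; nlinarith
  have hhigh : G y - G x ≤ (y - x) * (f y - f x) := by simp only [hG]; nlinarith
  have habs : |G y - G x| ≤ |y - x| * |f y - f x| := by
    rw [← abs_mul]
    rcases abs_cases ((y - x) * (f y - f x)) with ⟨h, _⟩ | ⟨h, _⟩ <;>
      rw [abs_le] <;> constructor <;> nlinarith
  have hpos : 0 < |y - x| := abs_pos.mpr (sub_ne_zero.mpr hyx')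
  rw [slope_def_field]
  rw [Real.norm_eq_abs, div_eq_mul_inv, abs_mul, abs_inv]
  rw [← div_eq_mul_inv, div_le_iff₀ hpos]
  linarith [habs]
end

section
/- Let f : ℝ≥0 → ℝ≥0 be piecewise continuous, meaning f has at most finitely many points of discontinuity in every bounded interval of [0, ∞). If g₁ and g₂ both satisfy ∀ x y ≥ 0, gᵢ(y) − gᵢ(x) ≥ x·(f(y) − f(x)), then g₁ − g₂ is a constant function on [0, ∞). -/
/-- if `f` is piecewise continuous on `[0, ∞)` (finitely many discontinuities
in every bounded interval), then any two solutions of the incentive inequality differ by a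
constant. -/
theorem solutions_differ_by_constant_of_piecewise_continuous (f g₁ g₂ : ℝ → ℝ)
    (hf : ∀ x ≥ (0:ℝ), 0 ≤ f x)
    (hg₁ : ∀ x ≥ (0:ℝ), 0 ≤ g₁ x) (hg₂ : ∀ x ≥ (0:ℝ), 0 ≤ g₂ x)
    (hpc : ∀ M : ℝ, 0 < M →
      {x | x ∈ Set.Icc (0:ℝ) M ∧ ¬ ContinuousWithinAt f (Set.Ici 0) x}.Finite)
    (h₁ : ∀ x ≥ (0:ℝ), ∀ y ≥ (0:ℝ), g₁ y - g₁ x ≥ x * (f y - f x))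
    (h₂ : ∀ x ≥ (0:ℝ), ∀ y ≥ (0:ℝ), g₂ y - g₂ x ≥ x * (f y - f x)) :
    ∃ C : ℝ, ∀ x ≥ (0:ℝ), g₁ x - g₂ x = C := by
  -- Key two-sided estimate: |h b - h a| ≤ (b-a)(f b - f a) for 0 ≤ a ≤ b.
  have key : ∀ a b : ℝ, 0 ≤ a → a ≤ b →
      |(g₁ b - g₂ b) - (g₁ a - g₂ a)| ≤ (b - a) * (f b - f a) := by
    intro a b ha hab
    have hb : 0 ≤ b := ha.trans hab
    have k1 := h₁ a ha b hb
    have k2 := h₁ b hb a ha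
    have k3 := h₂ a ha b hb
    have k4 := h₂ b hb a ha
    rw [abs_le]
    constructor <;> nlinarith
  refine ⟨g₁ 0 - g₂ 0, ?_⟩
  intro x hx
  rcases eq_or_lt_of_le hx with rfl | hx0
  · rfl
  have hmono : 0 ≤ f x - f 0 := by
    have k1 := h₁ 0 le_rfl x hx
    have k2 := h₁ x hx 0 le_rfl
    nlinarith
  -- Telescoping estimate along the uniform partition of [0, x] into n pieces.
  have main : ∀ n : ℕ, 0 < n → ∀ k : ℕ, k ≤ n →
      |(g₁ ((k:ℝ)*x/n) - g₂ ((k:ℝ)*x/n)) - (g₁ 0 - g₂ 0)|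
        ≤ (x/n) * (f ((k:ℝ)*x/n) - f 0) := by
    intro n hn
    have hnpos : (0:ℝ) < n := Nat.cast_pos.mpr hn
    intro k
    induction k with
    | zero => intro _; simp
    | succ k ih =>
      intro hk
      have ih' := ih (Nat.le_of_succ_le hk)
      have hp0 : (0:ℝ) ≤ (k:ℝ)*x/n := by positivity
      have hle : (k:ℝ)*x/n ≤ ((k:ℝ)+1)*x/n := by
        gcongr
        nlinarith
      have hstep := key ((k:ℝ)*x/n) (((k:ℝ)+1)*x/n) hp0 hle
      have hd : ((k:ℝ)+1)*x/n - (k:ℝ)*x/n = x/n := by field_simp; ring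
      have cast1 : ((k+1:ℕ):ℝ) = (k:ℝ)+1 := by push_cast; ring
      rw [cast1]
      calc |(g₁ (((k:ℝ)+1)*x/n) - g₂ (((k:ℝ)+1)*x/n)) - (g₁ 0 - g₂ 0)|
          ≤ |(g₁ (((k:ℝ)+1)*x/n) - g₂ (((k:ℝ)+1)*x/n)) -
                (g₁ ((k:ℝ)*x/n) - g₂ ((k:ℝ)*x/n))|
            + |(g₁ ((k:ℝ)*x/n) - g₂ ((k:ℝ)*x/n)) - (g₁ 0 - g₂ 0)| := by
              exact abs_sub_le _ _ _
        _ ≤ (x/n) * (f (((k:ℝ)+1)*x/n) - f ((k:ℝ)*x/n))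
            + (x/n) * (f ((k:ℝ)*x/n) - f 0) := by
              rw [hd] at hstep; linarith
        _ = (x/n) * (f (((k:ℝ)+1)*x/n) - f 0) := by ring
  have final : ∀ n : ℕ, 0 < n →
      |(g₁ x - g₂ x) - (g₁ 0 - g₂ 0)| ≤ (x/n) * (f x - f 0) := by
    intro n hn
    have hnpos : (0:ℝ) < n := Nat.cast_pos.mpr hn
    have := main n hn n le_rfl
    have hx' : (n:ℝ)*x/n = x := by field_simp
    rwa [hx'] at this
  by_contra hne
  set c := |(g₁ x - g₂ x) - (g₁ 0 - g₂ 0)| with hc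
  have hcpos : 0 < c := abs_pos.mpr (sub_ne_zero.mpr hne)
  obtain ⟨n, hn⟩ := exists_nat_gt (x * (f x - f 0) / c)
  have hrhs : 0 ≤ x * (f x - f 0) / c := by positivity
  have hn0 : 0 < n := by exact_mod_cast hrhs.trans_lt hn
  have hnpos : (0:ℝ) < n := Nat.cast_pos.mpr hn0
  have h1 := final n hn0
  have h2 : x * (f x - f 0) < n * c := by
    rw [div_lt_iff₀ hcpos] at hn
    nlinarith
  have h3 : (x/n) * (f x - f 0) < c := by
    rw [div_mul_eq_mul_div, div_lt_iff₀ hnpos, mul_comm c]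
    exact h2
  linarith
end

section
/- Let f : ℝ≥0 → ℝ≥0 and let S ⊆ [0, ∞) be the set of points of discontinuity of f. Suppose S is of first species, i.e., for some n ≥ 0 the (n+1)-st derived set S^(n+1) is empty, where S^(1) denotes the set of limit (accumulation) points of S and S^(k+1) = (S^(k))^(1). If g₁ and g₂ both satisfy ∀ x y ≥ 0, gᵢ(y) − gᵢ(x) ≥ x·(f(y) − f(x)), then g₁ − g₂ is a constant function on [0, ∞). -/
/-- if the discontinuity set of `f` on `[0, ∞)` is of first species (some
iterated derived set is empty, where `derivedSet S = {x | AccPt x (𝓟 S)}` is the set of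
accumulation points of `S`), then any two solutions of the incentive inequality differ by
a constant. -/
theorem solutions_differ_by_constant_of_first_species (f g₁ g₂ : ℝ → ℝ)
    (hf : ∀ x ≥ (0:ℝ), 0 ≤ f x)
    (hg₁ : ∀ x ≥ (0:ℝ), 0 ≤ g₁ x) (hg₂ : ∀ x ≥ (0:ℝ), 0 ≤ g₂ x)
    (S : Set ℝ)
    (hS : S = {x | 0 ≤ x ∧ ¬ ContinuousWithinAt f (Set.Ici 0) x})
    (n : ℕ) (hfs : derivedSet^[n + 1] S = ∅)
    (h₁ : ∀ x ≥ (0:ℝ), ∀ y ≥ (0:ℝ), g₁ y - g₁ x ≥ x * (f y - f x))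
    (h₂ : ∀ x ≥ (0:ℝ), ∀ y ≥ (0:ℝ), g₂ y - g₂ x ≥ x * (f y - f x)) :
    ∃ C : ℝ, ∀ x ≥ (0:ℝ), g₁ x - g₂ x = C := by
  -- monotonicity of f on [0, ∞)
  have mono : ∀ a b : ℝ, 0 ≤ a → a ≤ b → f a ≤ f b := by
    intro a b ha hab
    have hb : 0 ≤ b := ha.trans hab
    have h1 := h₁ a ha b hb
    have h2 := h₁ b hb a ha
    rcases eq_or_lt_of_le hab with rfl | hlt
    · exact le_rfl
    · nlinarith
  -- key local estimate on h = g₁ - g₂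
  have step : ∀ a b : ℝ, 0 ≤ a → a ≤ b →
      |(g₁ b - g₂ b) - (g₁ a - g₂ a)| ≤ (b - a) * (f b - f a) := by
    intro a b ha hab
    have hb : 0 ≤ b := ha.trans hab
    have h1a := h₁ a ha b hb
    have h1b := h₁ b hb a ha
    have h2a := h₂ a ha b hb
    have h2b := h₂ b hb a ha
    rw [abs_le]
    constructor <;> nlinarith
  refine ⟨g₁ 0 - g₂ 0, ?_⟩
  intro x hx
  -- chained estimate along a uniform partition
  have key : ∀ N : ℕ, 1 ≤ N →
      |(g₁ x - g₂ x) - (g₁ 0 - g₂ 0)| ≤ (x / N) * (f x - f 0) := by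
    intro N hN
    have hNpos : (0:ℝ) < N := by exact_mod_cast hN
    have main : ∀ k : ℕ, k ≤ N →
        |(g₁ ((k:ℝ) * x / N) - g₂ ((k:ℝ) * x / N)) - (g₁ 0 - g₂ 0)|
          ≤ (x / N) * (f ((k:ℝ) * x / N) - f 0) := by
      intro k hk
      induction k with
      | zero => simp
      | succ m ih =>
        have ihm := ih (Nat.le_of_succ_le hk)
        have hdiv : 0 ≤ x / (N:ℝ) := div_nonneg hx hNpos.le
        set a : ℝ := (m:ℝ) * x / N with ha_def
        set b : ℝ := ((m:ℕ) + 1 : ℝ) * x / N with hb_def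
        have ha : 0 ≤ a := by
          apply div_nonneg _ hNpos.le
          positivity
        have hab : a ≤ b := by
          rw [ha_def, hb_def]
          gcongr
          linarith
        have hba : b - a = x / N := by rw [ha_def, hb_def]; ring
        have hs := step a b ha hab
        rw [hba] at hs
        have hcast : ((m + 1 : ℕ) : ℝ) = (m : ℝ) + 1 := by push_cast; ring
        rw [hcast]
        calc |(g₁ b - g₂ b) - (g₁ 0 - g₂ 0)|
            ≤ |(g₁ b - g₂ b) - (g₁ a - g₂ a)| + |(g₁ a - g₂ a) - (g₁ 0 - g₂ 0)| := by
              have := abs_sub_abs_le_abs_sub (g₁ b - g₂ b) (g₁ a - g₂ a)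
              exact abs_sub_le _ _ _
          _ ≤ (x / N) * (f b - f a) + (x / N) * (f a - f 0) := add_le_add hs ihm
          _ = (x / N) * (f b - f 0) := by ring
    have hNx : ((N:ℝ)) * x / N = x := by field_simp
    have := main N le_rfl
    rwa [hNx] at this
  -- let N → ∞
  have hΔ : 0 ≤ f x - f 0 := sub_nonneg.2 (mono 0 x le_rfl hx)
  by_contra hne
  have hcpos : 0 < |(g₁ x - g₂ x) - (g₁ 0 - g₂ 0)| := by
    rw [abs_pos, sub_ne_zero]
    exact hne
  set c : ℝ := |(g₁ x - g₂ x) - (g₁ 0 - g₂ 0)| with hc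
  set K : ℝ := x * (f x - f 0) with hK
  have hKnn : 0 ≤ K := mul_nonneg hx hΔ
  obtain ⟨N, hNgt⟩ := exists_nat_gt (K / c)
  have hN1 : 1 ≤ N + 1 := Nat.le_add_left 1 N
  have hkey := key (N + 1) hN1
  have hNpos : (0:ℝ) < ((N:ℕ) + 1 : ℕ) := by positivity
  have hlt : K / ((N + 1 : ℕ) : ℝ) < c := by
    rw [div_lt_iff₀ (by positivity)]
    have : K / c < ((N + 1 : ℕ) : ℝ) := lt_of_lt_of_le hNgt (by push_cast; linarith)
    calc K = (K / c) * c := by field_simp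
      _ < ((N + 1 : ℕ) : ℝ) * c := by
          apply mul_lt_mul_of_pos_right this hcpos
      _ = c * ((N + 1 : ℕ) : ℝ) := by ring
  have heq : (x / ((N + 1 : ℕ) : ℝ)) * (f x - f 0) = K / ((N + 1 : ℕ) : ℝ) := by
    rw [hK]; ring
  rw [heq] at hkey
  exact absurd hkey (not_le.2 hlt)
end

section
/- (Goldowski–Tonelli theorem) Let G : ℝ≥0 → ℝ be continuous on [0, ∞), differentiable at all points of [0, ∞) except at most a countable set, and suppose G′(x) ≥ 0 for almost every x (with respect to Lebesgue measure) at which G is differentiable. Then G is monotonically non-decreasing on [0, ∞). -/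
open MeasureTheory

/-- Goldowski–Tonelli: a continuous function on `[0, ∞)` that is
differentiable off a countable set, with nonnegative derivative almost everywhere
(wherever differentiable), is monotone non-decreasing on `[0, ∞)`. -/
theorem goldowski_tonelli (G : ℝ → ℝ)
    (hc : ContinuousOn G (Set.Ici 0))
    (D : Set ℝ) (hD : D.Countable)
    (hd : ∀ x ∈ Set.Ici (0:ℝ) \ D, DifferentiableWithinAt ℝ G (Set.Ici 0) x)
    (h' : ∀ᵐ x ∂(volume.restrict (Set.Ici (0:ℝ))),
      DifferentiableWithinAt ℝ G (Set.Ici 0) x → 0 ≤ derivWithin G (Set.Ici 0) x) :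
    ∀ x y : ℝ, 0 ≤ x → x ≤ y → G x ≤ G y := by
  intro a b ha hab
  by_contra hGab
  push_neg at hGab
  have hIcc_sub : Set.Icc a b ⊆ Set.Ici (0:ℝ) := fun x hx => le_trans ha hx.1
  have hcIcc : ContinuousOn G (Set.Icc a b) := hc.mono hIcc_sub
  -- Exceptional sets
  set N' : Set ℝ := {x | x ∈ Set.Icc a b ∧ x ∉ D ∧ derivWithin G (Set.Ici 0) x < 0} with hN'def
  set Z' : Set ℝ := {x | x ∈ Set.Icc a b ∧ x ∉ D ∧ derivWithin G (Set.Ici 0) x = 0} with hZ'def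
  -- D ∩ Icc has countable, hence null, image
  have hDim : volume (G '' (D ∩ Set.Icc a b)) = 0 :=
    ((hD.mono Set.inter_subset_left).image G).measure_zero _
  -- N' is null
  have hN0 : volume N' = 0 := by
    have h1 : (volume.restrict (Set.Ici (0:ℝ)))
        {x | ¬ (DifferentiableWithinAt ℝ G (Set.Ici 0) x →
          0 ≤ derivWithin G (Set.Ici 0) x)} = 0 := ae_iff.1 h'
    have h2 : N' ⊆ {x | ¬ (DifferentiableWithinAt ℝ G (Set.Ici 0) x →
        0 ≤ derivWithin G (Set.Ici 0) x)} := by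
      intro x hx hP
      exact absurd (hP (hd x ⟨hIcc_sub hx.1, hx.2.1⟩)) (not_le.2 hx.2.2)
    have h3 : N' ∩ Set.Ici (0:ℝ) = N' :=
      Set.inter_eq_self_of_subset_left (fun x hx => hIcc_sub hx.1)
    refine le_antisymm ?_ zero_le
    calc volume N' = volume (N' ∩ Set.Ici 0) := by rw [h3]
      _ = (volume.restrict (Set.Ici (0:ℝ))) N' :=
          (Measure.restrict_apply' measurableSet_Ici).symm
      _ ≤ 0 := h1 ▸ measure_mono h2
  -- image of N' is null (differentiable image of a null set)
  have hNim : volume (G '' N') = 0 := by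
    apply addHaar_image_eq_zero_of_differentiableOn_of_addHaar_eq_zero volume _ hN0
    intro x hx
    exact (hd x ⟨hIcc_sub hx.1, hx.2.1⟩).mono (fun y hy => hIcc_sub hy.1)
  -- image of Z' is null (Sard in dimension 1)
  have hZim : volume (G '' Z') = 0 := by
    apply addHaar_image_eq_zero_of_det_fderivWithin_eq_zero volume
      (f' := fun x => ContinuousLinearMap.smulRight (1 : ℝ →L[ℝ] ℝ)
        (derivWithin G (Set.Ici 0) x))
    · intro x hx
      exact ((hd x ⟨hIcc_sub hx.1, hx.2.1⟩).hasDerivWithinAt.mono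
        (fun y hy => hIcc_sub hy.1)).hasFDerivWithinAt
    · intro x hx
      rw [hx.2.2]
      have h0 : ContinuousLinearMap.smulRight (1 : ℝ →L[ℝ] ℝ) (0:ℝ) = 0 := by
        ext; simp
      rw [h0]
      simp [ContinuousLinearMap.det, LinearMap.det_zero]
  -- every value strictly between G b and G a lies in a bad image
  have hsub : Set.Ioo (G b) (G a) ⊆
      G '' (D ∩ Set.Icc a b) ∪ (G '' N' ∪ G '' Z') := by
    intro c hc'
    -- last point where G = c
    set S : Set ℝ := Set.Icc a b ∩ G ⁻¹' {c} with hSdef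
    have hSclosed : IsClosed S :=
      hcIcc.preimage_isClosed_of_isClosed isClosed_Icc isClosed_singleton
    have hScomp : IsCompact S :=
      isCompact_Icc.of_isClosed_subset hSclosed Set.inter_subset_left
    have hSne : S.Nonempty := by
      obtain ⟨x₀, hx₀, hGx₀⟩ := intermediate_value_Icc' hab hcIcc
        ⟨le_of_lt hc'.1, le_of_lt hc'.2⟩
      exact ⟨x₀, hx₀, hGx₀⟩
    set ξ : ℝ := sSup S with hξdef
    have hξS : ξ ∈ S := hScomp.sSup_mem hSne
    have hGξ : G ξ = c := hξS.2
    have hξa : a ≤ ξ := hξS.1.1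
    have hξb : ξ < b := lt_of_le_of_ne hξS.1.2 (by
      intro h; rw [h] at hGξ; exact (ne_of_lt hc'.1) hGξ)
    -- G < c strictly to the right of ξ inside (ξ, b]
    have hlt : ∀ y ∈ Set.Ioc ξ b, G y < c := by
      intro y hy
      by_contra hge
      push_neg at hge
      rcases eq_or_lt_of_le hge with heq | hgt
      · have : y ∈ S := ⟨⟨le_trans hξa (le_of_lt hy.1), hy.2⟩, heq.symm⟩
        exact absurd (le_csSup hScomp.bddAbove this) (not_le.2 hy.1)
      · obtain ⟨z, hz, hGz⟩ := intermediate_value_Icc' hy.2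
          (hcIcc.mono (Set.Icc_subset_Icc (le_trans hξa (le_of_lt hy.1)) le_rfl))
          ⟨le_of_lt hc'.1, le_of_lt hgt⟩
        have hzS : z ∈ S := ⟨⟨le_trans hξa (le_trans (le_of_lt hy.1) hz.1), hz.2⟩, hGz⟩
        have : z ≤ ξ := le_csSup hScomp.bddAbove hzS
        exact absurd (lt_of_lt_of_le hy.1 hz.1) (not_lt.2 this)
    by_cases hξD : ξ ∈ D
    · exact Or.inl ⟨ξ, ⟨hξD, hξS.1⟩, hGξ⟩
    · -- ξ is a point of differentiability with derivative ≤ 0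
      have hdiff := hd ξ ⟨hIcc_sub hξS.1, hξD⟩
      have hder := hdiff.hasDerivWithinAt
      have htend := hasDerivWithinAt_iff_tendsto_slope.1 hder
      have hsub' : Set.Ioi ξ ⊆ Set.Ici (0:ℝ) \ {ξ} := by
        intro y hy
        exact ⟨Set.mem_Ici.2 (le_trans (hIcc_sub hξS.1) (le_of_lt hy)), ne_of_gt hy⟩
      have htend' : Filter.Tendsto (slope G ξ) (nhdsWithin ξ (Set.Ioi ξ))
          (nhds (derivWithin G (Set.Ici 0) ξ)) :=
        htend.mono_left (nhdsWithin_mono ξ hsub')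
      have hev : ∀ᶠ y in nhdsWithin ξ (Set.Ioi ξ), slope G ξ y ≤ 0 := by
        filter_upwards [Ioc_mem_nhdsGT_of_mem (⟨le_rfl, hξb⟩ : ξ ∈ Set.Ico ξ b)] with y hy
        rw [slope_def_field]
        apply div_nonpos_of_nonpos_of_nonneg
        · rw [hGξ]; exact sub_nonpos.2 (le_of_lt (hlt y hy))
        · exact sub_nonneg.2 (le_of_lt hy.1)
      have hd0 : derivWithin G (Set.Ici 0) ξ ≤ 0 := le_of_tendsto htend' hev
      rcases lt_or_eq_of_le hd0 with hneg | hzero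
      · exact Or.inr (Or.inl ⟨ξ, ⟨hξS.1, hξD, hneg⟩, hGξ⟩)
      · exact Or.inr (Or.inr ⟨ξ, ⟨hξS.1, hξD, hzero⟩, hGξ⟩)
  -- conclude
  have hIoo : volume (Set.Ioo (G b) (G a)) = 0 := by
    refine measure_mono_null hsub ?_
    refine measure_union_null hDim (measure_union_null hNim hZim)
  rw [Real.volume_Ioo, ENNReal.ofReal_eq_zero] at hIoo
  linarith
end

section
/- Let f, g₁, g₂ : ℝ≥0 → ℝ≥0 with both g₁ and g₂ satisfying ∀ x y ≥ 0, gᵢ(y) − gᵢ(x) ≥ x·(f(y) − f(x)). Then, with no assumption whatsoever on f, the difference g₁ − g₂ is a constant function on [0, ∞). -/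
/-- with no assumption on `f`, any two solutions of the incentive inequality
differ by a constant on `[0, ∞)`. -/
theorem solutions_differ_by_constant (f g₁ g₂ : ℝ → ℝ)
    (hf : ∀ x ≥ (0:ℝ), 0 ≤ f x)
    (hg₁ : ∀ x ≥ (0:ℝ), 0 ≤ g₁ x) (hg₂ : ∀ x ≥ (0:ℝ), 0 ≤ g₂ x)
    (h₁ : ∀ x ≥ (0:ℝ), ∀ y ≥ (0:ℝ), g₁ y - g₁ x ≥ x * (f y - f x))
    (h₂ : ∀ x ≥ (0:ℝ), ∀ y ≥ (0:ℝ), g₂ y - g₂ x ≥ x * (f y - f x)) :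
    ∃ C : ℝ, ∀ x ≥ (0:ℝ), g₁ x - g₂ x = C := by
  set h : ℝ → ℝ := fun x => g₁ x - g₂ x with hh
  have key : ∀ a ≥ (0:ℝ), ∀ b ≥ (0:ℝ), h b - h a ≤ (b - a) * (f b - f a) := by
    intro a ha b hb
    have k1 := h₁ b hb a ha
    have k2 := h₂ a ha b hb
    simp only [hh]
    nlinarith
  have main : ∀ x ≥ (0:ℝ), ∀ y ≥ (0:ℝ), h y - h x ≤ 0 := by
    intro x hx y hy
    have bound : ∀ n : ℕ, 0 < n → h y - h x ≤ ((y - x) * (f y - f x)) / n := by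
      intro n hn
      have hn' : (n:ℝ) ≠ 0 := Nat.cast_ne_zero.mpr hn.ne'
      have hnp : (0:ℝ) < n := Nat.cast_pos.mpr hn
      set d : ℝ := (y - x) / n with hd
      set t : ℕ → ℝ := fun i => x + i * d with ht
      have hnd : (n:ℝ) * d = y - x := by rw [hd]; field_simp
      have ht0 : ∀ i ≤ n, 0 ≤ t i := by
        intro i hi
        have hic : (i:ℝ) ≤ n := Nat.cast_le.mpr hi
        simp only [ht]
        rcases le_or_gt 0 d with hdn | hdn
        · have : 0 ≤ (i:ℝ) * d := mul_nonneg (Nat.cast_nonneg i) hdn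
          linarith
        · have h1 : (n:ℝ) * d ≤ (i:ℝ) * d :=
            mul_le_mul_of_nonpos_right hic hdn.le
          linarith
      have tn : t n = y := by simp only [ht]; rw [hnd]; ring
      have t0 : t 0 = x := by simp [ht]
      have tel_h : ∑ i ∈ Finset.range n, (h (t (i+1)) - h (t i)) = h y - h x := by
        rw [Finset.sum_range_sub (fun i => h (t i)), tn, t0]
      have tel_f : ∑ i ∈ Finset.range n, (f (t (i+1)) - f (t i)) = f y - f x := by
        rw [Finset.sum_range_sub (fun i => f (t i)), tn, t0]
      have hsum : ∑ i ∈ Finset.range n, (h (t (i+1)) - h (t i))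
          ≤ ∑ i ∈ Finset.range n, d * (f (t (i+1)) - f (t i)) := by
        apply Finset.sum_le_sum
        intro i hi
        have hi' : i + 1 ≤ n := Finset.mem_range.mp hi
        have hk := key (t i) (ht0 i (le_of_lt (Finset.mem_range.mp hi))) (t (i+1)) (ht0 (i+1) hi')
        have hdiff : t (i+1) - t i = d := by simp only [ht]; push_cast; ring
        rw [hdiff] at hk
        exact hk
      calc h y - h x = ∑ i ∈ Finset.range n, (h (t (i+1)) - h (t i)) := tel_h.symm
        _ ≤ ∑ i ∈ Finset.range n, d * (f (t (i+1)) - f (t i)) := hsum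
        _ = d * (f y - f x) := by rw [← Finset.mul_sum, tel_f]
        _ = ((y - x) * (f y - f x)) / n := by rw [hd]; ring
    by_contra hc
    push_neg at hc
    set ε : ℝ := h y - h x with hε
    set D : ℝ := (y - x) * (f y - f x) with hD
    obtain ⟨n, hnD⟩ := exists_nat_gt (max 0 (D / ε))
    have hnp : (0:ℝ) < n := lt_of_le_of_lt (le_max_left _ _) hnD
    have hn0 : 0 < n := Nat.cast_pos.mp hnp
    have hb := bound n hn0
    have h1 : ε * n ≤ D := (le_div_iff₀ hnp).mp hb
    have h2 : D / ε < n := lt_of_le_of_lt (le_max_right _ _) hnD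
    have h3 : D < n * ε := (div_lt_iff₀ hc).mp h2
    nlinarith
  refine ⟨h 0, fun x hx => ?_⟩
  have a := main 0 le_rfl x hx
  have b := main x hx 0 le_rfl
  simp only [hh] at a b ⊢
  linarith
end

section
/- Let f, g : ℝ≥0 → ℝ≥0. The inequality ∀ x y ≥ 0, g(y) − g(x) ≥ x·(f(y) − f(x)) holds if and only if f is monotonically non-decreasing on [0, ∞) and there exists a constant C such that for all x ≥ 0, g(x) = C + x·f(x) − ∫₀ˣ f(z) dz. -/
private lemma aux_int {f : ℝ → ℝ} (hmono : ∀ x y : ℝ, 0 ≤ x → x ≤ y → f x ≤ f y)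
    {a b : ℝ} (ha : 0 ≤ a) (hab : a ≤ b) :
    IntervalIntegrable f MeasureTheory.volume a b := by
  apply MonotoneOn.intervalIntegrable
  intro u hu v hv huv
  rw [Set.uIcc_of_le hab] at hu hv
  exact hmono u v (le_trans ha hu.1) huv

private lemma aux_bounds {f : ℝ → ℝ} (hmono : ∀ x y : ℝ, 0 ≤ x → x ≤ y → f x ≤ f y)
    {a b : ℝ} (ha : 0 ≤ a) (hab : a ≤ b) :
    (b - a) * f a ≤ (∫ z in a..b, f z) ∧ (∫ z in a..b, f z) ≤ (b - a) * f b := by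
  constructor
  · have h := intervalIntegral.integral_mono_on (μ := MeasureTheory.volume) hab
      intervalIntegrable_const (aux_int hmono ha hab)
      (fun x hx => hmono a x ha hx.1)
    simpa [smul_eq_mul] using h
  · have h := intervalIntegral.integral_mono_on (μ := MeasureTheory.volume) hab
      (aux_int hmono ha hab) intervalIntegrable_const
      (fun x hx => hmono x b (le_trans ha hx.1) hx.2)
    simpa [smul_eq_mul] using h

/-- the incentive inequality holds iff `f` is monotone on `[0, ∞)` and
`g(x) = C + x·f(x) − ∫₀ˣ f` for some constant `C`. -/
theorem incentive_iff_monotone_and_payment_formula (f g : ℝ → ℝ)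
    (hf : ∀ x ≥ (0:ℝ), 0 ≤ f x) (hg : ∀ x ≥ (0:ℝ), 0 ≤ g x) :
    (∀ x ≥ (0:ℝ), ∀ y ≥ (0:ℝ), g y - g x ≥ x * (f y - f x)) ↔
    ((∀ x y : ℝ, 0 ≤ x → x ≤ y → f x ≤ f y) ∧
      ∃ C : ℝ, ∀ x ≥ (0:ℝ), g x = C + x * f x - ∫ z in (0:ℝ)..x, f z) := by
  constructor
  · intro hineq
    have hmono : ∀ x y : ℝ, 0 ≤ x → x ≤ y → f x ≤ f y := by
      intro x y hx hxy
      rcases eq_or_lt_of_le hxy with rfl | hlt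
      · exact le_refl _
      have hy : (0:ℝ) ≤ y := le_trans hx hxy
      have h1 := hineq x hx y hy
      have h2 := hineq y hy x hx
      nlinarith
    refine ⟨hmono, g 0, ?_⟩
    -- the "utility" function
    set H : ℝ → ℝ := fun x => g x - x * f x + ∫ z in (0:ℝ)..x, f z with hH
    have H0 : H 0 = g 0 := by simp [hH]
    have step : ∀ a b : ℝ, 0 ≤ a → a ≤ b → |H b - H a| ≤ (b - a) * (f b - f a) := by
      intro a b ha hab
      have hb : (0:ℝ) ≤ b := le_trans ha hab
      have hint : (∫ z in (0:ℝ)..b, f z) - (∫ z in (0:ℝ)..a, f z) = ∫ z in a..b, f z :=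
        intervalIntegral.integral_interval_sub_left (aux_int hmono le_rfl hb)
          (aux_int hmono le_rfl ha)
      have hlb := (aux_bounds hmono ha hab).1
      have hub := (aux_bounds hmono ha hab).2
      have h1 := hineq a ha b hb
      have h2 := hineq b hb a ha
      rw [abs_le]
      constructor <;> simp only [hH] <;> nlinarith [hint]
    have key : ∀ x : ℝ, 0 ≤ x → ∀ n : ℕ, 0 < n →
        |H x - g 0| ≤ x * (f x - f 0) / n := by
      intro x hx n hn
      have hn' : (0:ℝ) < n := by exact_mod_cast hn
      set t : ℕ → ℝ := fun i => (i : ℝ) * x / n with ht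
      have ht0 : t 0 = 0 := by simp [ht]
      have htn : t n = x := by simp only [ht]; field_simp [hn'.ne']
      have htnn : ∀ i : ℕ, 0 ≤ t i := by
        intro i; apply div_nonneg (mul_nonneg (Nat.cast_nonneg i) hx) hn'.le
      have htstep : ∀ i : ℕ, t (i + 1) - t i = x / n := by
        intro i; simp only [ht]; push_cast; ring
      have htle : ∀ i : ℕ, t i ≤ t (i + 1) := by
        intro i
        have := htstep i
        have : 0 ≤ t (i+1) - t i := by rw [this]; positivity
        linarith
      have tele : H x - g 0 = ∑ i ∈ Finset.range n, (H (t (i+1)) - H (t i)) := by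
        rw [Finset.sum_range_sub (fun i => H (t i)) n, ht0, htn, H0]
      have tele2 : ∑ i ∈ Finset.range n, (x / n) * (f (t (i+1)) - f (t i))
          = x * (f x - f 0) / n := by
        rw [← Finset.mul_sum, Finset.sum_range_sub (fun i => f (t i)) n, ht0, htn]
        ring
      calc |H x - g 0| = |∑ i ∈ Finset.range n, (H (t (i+1)) - H (t i))| := by rw [tele]
        _ ≤ ∑ i ∈ Finset.range n, |H (t (i+1)) - H (t i)| := Finset.abs_sum_le_sum_abs _ _
        _ ≤ ∑ i ∈ Finset.range n, (x / n) * (f (t (i+1)) - f (t i)) := by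
            apply Finset.sum_le_sum
            intro i _
            have := step (t i) (t (i+1)) (htnn i) (htle i)
            rwa [htstep i] at this
        _ = x * (f x - f 0) / n := tele2
    intro x hx
    have hHx : H x = g 0 := by
      by_contra hne
      have hd : 0 < |H x - g 0| := abs_pos.mpr (sub_ne_zero.mpr hne)
      obtain ⟨n, hn⟩ := exists_nat_gt (x * (f x - f 0) / |H x - g 0|)
      have hcnn : 0 ≤ x * (f x - f 0) := mul_nonneg hx (by linarith [hmono 0 x le_rfl hx])
      have hn0 : 0 < n := by
        by_contra hc
        push_neg at hc
        interval_cases n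
        simp only [Nat.cast_zero] at hn
        have : 0 ≤ x * (f x - f 0) / |H x - g 0| := div_nonneg hcnn hd.le
        linarith
      have hn' : (0:ℝ) < n := by exact_mod_cast hn0
      have hk := key x hx n hn0
      rw [div_lt_iff₀ hd] at hn
      have : x * (f x - f 0) / n < |H x - g 0| := by
        rw [div_lt_iff₀ hn']; linarith [hn]
      linarith
    simp only [hH] at hHx
    linarith
  · rintro ⟨hmono, C, hC⟩ x hx y hy
    have hgx := hC x hx
    have hgy := hC y hy
    rcases le_total x y with hxy | hyx
    · have hint : (∫ z in (0:ℝ)..y, f z) - (∫ z in (0:ℝ)..x, f z) = ∫ z in x..y, f z :=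
        intervalIntegral.integral_interval_sub_left (aux_int hmono le_rfl hy)
          (aux_int hmono le_rfl hx)
      have hub := (aux_bounds hmono hx hxy).2
      nlinarith [hint]
    · have hint : (∫ z in (0:ℝ)..x, f z) - (∫ z in (0:ℝ)..y, f z) = ∫ z in y..x, f z :=
        intervalIntegral.integral_interval_sub_left (aux_int hmono le_rfl hx)
          (aux_int hmono le_rfl hy)
      have hlb := (aux_bounds hmono hy hyx).1
      nlinarith [hint]
end

section
/- Consider a single-parameter mechanism with n agents given by an allocation rule a : ℝ≥0ⁿ → ℝ≥0ⁿ and a payment rule p : ℝ≥0ⁿ → ℝ≥0ⁿ. If the mechanism is incentive compatible — i.e., for every agent i, every valuation vᵢ ≥ 0, every bid y ≥ 0, and every vector b₋ᵢ of bids of the other agents, vᵢ·aᵢ(vᵢ, b₋ᵢ) − pᵢ(vᵢ, b₋ᵢ) ≥ vᵢ·aᵢ(y, b₋ᵢ) − pᵢ(y, b₋ᵢ) — then the allocation rule a is monotone, i.e., for every agent i and every b₋ᵢ, the function x ↦ aᵢ(x, b₋ᵢ) is monotonically non-decreasing on [0, ∞). -/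
/-- an incentive compatible single-parameter mechanism has a monotone
allocation rule. -/
theorem allocation_monotone_of_incentive_compatible (n : ℕ)
    (a p : (Fin n → ℝ) → (Fin n → ℝ))
    (ha : ∀ b : Fin n → ℝ, (∀ j, 0 ≤ b j) → ∀ i, 0 ≤ a b i)
    (hp : ∀ b : Fin n → ℝ, (∀ j, 0 ≤ b j) → ∀ i, 0 ≤ p b i)
    (hic : ∀ i : Fin n, ∀ b : Fin n → ℝ, (∀ j, 0 ≤ b j) →
      ∀ v ≥ (0:ℝ), ∀ y ≥ (0:ℝ),
        v * a (Function.update b i v) i - p (Function.update b i v) i ≥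
        v * a (Function.update b i y) i - p (Function.update b i y) i) :
    ∀ i : Fin n, ∀ b : Fin n → ℝ, (∀ j, 0 ≤ b j) →
      ∀ x y : ℝ, 0 ≤ x → x ≤ y →
        a (Function.update b i x) i ≤ a (Function.update b i y) i := by
  intro i b hb x y hx hxy
  have hy : 0 ≤ y := hx.trans hxy
  have h1 := hic i b hb x hx y hy
  have h2 := hic i b hb y hy x hx
  rcases eq_or_lt_of_le hxy with h | h
  · simp [h]
  · nlinarith [h1, h2]
end

section
/- Consider an allocation rule a : ℝ≥0ⁿ → ℝ≥0ⁿ that is monotone, i.e., for every agent i and every vector b₋ᵢ of bids of the other agents, the function x ↦ aᵢ(x, b₋ᵢ) is monotonically non-decreasing on [0, ∞). Then there exists a payment rule p : ℝ≥0ⁿ → ℝ≥0ⁿ such that the mechanism (a, p) is incentive compatible; in particular pᵢ(x, b₋ᵢ) = x·aᵢ(x, b₋ᵢ) − ∫₀ˣ aᵢ(z, b₋ᵢ) dz works. -/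
private lemma myers_key (f : ℝ → ℝ)
    (hf : ∀ x y : ℝ, 0 ≤ x → x ≤ y → f x ≤ f y) (v y : ℝ) (hv : 0 ≤ v) (hy : 0 ≤ y) :
    (v - y) * f y ≤ (∫ z in (0:ℝ)..v, f z) - ∫ z in (0:ℝ)..y, f z := by
  have hmono : ∀ c d : ℝ, 0 ≤ c → 0 ≤ d → IntervalIntegrable f MeasureTheory.volume c d := by
    intro c d hc hd
    apply MonotoneOn.intervalIntegrable
    intro x hx z hz hxz
    exact hf x z (le_trans (le_min hc hd) hx.1) hxz
  have hsub : (∫ z in (0:ℝ)..v, f z) - (∫ z in (0:ℝ)..y, f z) = ∫ z in y..v, f z :=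
    intervalIntegral.integral_interval_sub_left (hmono 0 v le_rfl hv) (hmono 0 y le_rfl hy)
  rw [hsub]
  rcases le_total y v with h | h
  · have : ∫ z in y..v, f y ≤ ∫ z in y..v, f z := by
      apply intervalIntegral.integral_mono_on h intervalIntegrable_const (hmono y v hy hv)
      intro x hx
      exact hf y x hy hx.1
    simpa [intervalIntegral.integral_const, mul_comm] using this
  · have : ∫ z in v..y, f z ≤ ∫ z in v..y, f y := by
      apply intervalIntegral.integral_mono_on h (hmono v y hv hy) intervalIntegrable_const
      intro x hx
      exact hf x y (le_trans hv hx.1) hx.2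
    rw [show (∫ z in y..v, f z) = -∫ z in v..y, f z from intervalIntegral.integral_symm v y]
    simp only [intervalIntegral.integral_const, smul_eq_mul] at this ⊢
    nlinarith

/-- a monotone allocation rule can be extended to an incentive compatible
mechanism; in particular the payment rule
`pᵢ(b) = bᵢ·aᵢ(b) − ∫₀^{bᵢ} aᵢ(z, b₋ᵢ) dz` works. -/
theorem exists_incentive_compatible_payment (n : ℕ)
    (a : (Fin n → ℝ) → (Fin n → ℝ))
    (ha : ∀ b : Fin n → ℝ, (∀ j, 0 ≤ b j) → ∀ i, 0 ≤ a b i)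
    (hmono : ∀ i : Fin n, ∀ b : Fin n → ℝ, (∀ j, 0 ≤ b j) →
      ∀ x y : ℝ, 0 ≤ x → x ≤ y →
        a (Function.update b i x) i ≤ a (Function.update b i y) i) :
    ∃ p : (Fin n → ℝ) → (Fin n → ℝ),
      (∀ b : Fin n → ℝ, (∀ j, 0 ≤ b j) → ∀ i, 0 ≤ p b i) ∧
      (∀ b : Fin n → ℝ, (∀ j, 0 ≤ b j) → ∀ i : Fin n,
        p b i = b i * a b i - ∫ z in (0:ℝ)..(b i), a (Function.update b i z) i) ∧
      (∀ i : Fin n, ∀ b : Fin n → ℝ, (∀ j, 0 ≤ b j) →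
        ∀ v ≥ (0:ℝ), ∀ y ≥ (0:ℝ),
          v * a (Function.update b i v) i - p (Function.update b i v) i ≥
          v * a (Function.update b i y) i - p (Function.update b i y) i) := by
  refine ⟨fun b i => b i * a b i - ∫ z in (0:ℝ)..(b i), a (Function.update b i z) i,
    ?_, fun b _ i => rfl, ?_⟩
  · intro b hb i
    have := myers_key (fun z => a (Function.update b i z) i)
      (fun x y hx hxy => hmono i b hb x y hx hxy) 0 (b i) le_rfl (hb i)
    simp only [Function.update_eq_self, intervalIntegral.integral_same] at this
    dsimp only
    nlinarith [this]
  · intro i b hb v hv y hy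
    have hupd : ∀ w : ℝ, (fun z => a (Function.update (Function.update b i w) i z) i)
        = fun z => a (Function.update b i z) i := by
      intro w; funext z; rw [Function.update_idem]
    have key := myers_key (fun z => a (Function.update b i z) i)
      (fun x y hx hxy => hmono i b hb x y hx hxy) v y hv hy
    simp only [hupd, Function.update_self]
    nlinarith [key]
end

section
/- Consider an allocation rule a : ℝ≥0ⁿ → ℝ≥0ⁿ that is monotone, i.e., for every agent i and every vector b₋ᵢ of bids of the other agents, the function x ↦ aᵢ(x, b₋ᵢ) is monotonically non-decreasing on [0, ∞). If p and q are two payment rules such that both mechanisms (a, p) and (a, q) are incentive compatible, then for every agent i and every b₋ᵢ there is a constant C (depending on i and b₋ᵢ) such that pᵢ(x, b₋ᵢ) − qᵢ(x, b₋ᵢ) = C for all x ≥ 0. -/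
/-- Auxiliary: if increments of `d` are controlled by increments of `f` with a factor
of the interval length, then `d` is constant on `[0, ∞)`. -/
lemma aux_const (f d : ℝ → ℝ)
    (H : ∀ s t : ℝ, 0 ≤ s → s ≤ t → |d t - d s| ≤ (t - s) * (f t - f s)) :
    ∀ x ≥ (0:ℝ), d x = d 0 := by
  intro x hx
  have key : ∀ N : ℕ, 0 < N → |d x - d 0| ≤ x * (f x - f 0) / N := by
    intro N hN
    have hN' : (0:ℝ) < N := by exact_mod_cast hN
    set g : ℕ → ℝ := fun k => d (x * k / N) with hg
    set F : ℕ → ℝ := fun k => f (x * k / N) with hF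
    have hxN : x * (N:ℝ) / N = x := by field_simp
    have hx0 : x * (0:ℕ) / (N:ℝ) = 0 := by simp
    have hdx : d x - d 0 = ∑ k ∈ Finset.range N, (g (k+1) - g k) := by
      rw [Finset.sum_range_sub]
      simp only [hg, hxN, hx0]
    have hterm : ∀ k ∈ Finset.range N,
        |g (k+1) - g k| ≤ (x / N) * (F (k+1) - F k) := by
      intro k _
      have hs : (0:ℝ) ≤ x * k / N := by positivity
      have hst : x * k / N ≤ x * (k+1) / N := by
        gcongr
        linarith
      have := H (x * k / N) (x * (k+1) / N) hs hst
      have hlen : x * ((k:ℝ)+1) / N - x * k / N = x / N := by field_simp; ring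
      simpa [hg, hF, hlen] using this
    calc |d x - d 0| = |∑ k ∈ Finset.range N, (g (k+1) - g k)| := by rw [hdx]
      _ ≤ ∑ k ∈ Finset.range N, |g (k+1) - g k| := Finset.abs_sum_le_sum_abs _ _
      _ ≤ ∑ k ∈ Finset.range N, (x / N) * (F (k+1) - F k) :=
          Finset.sum_le_sum hterm
      _ = (x / N) * (F N - F 0) := by rw [← Finset.mul_sum, Finset.sum_range_sub]
      _ = x * (f x - f 0) / N := by
          simp only [hF, hxN, hx0]
          ring
  -- conclude |d x - d 0| = 0
  have hM : 0 ≤ x * (f x - f 0) := le_trans (abs_nonneg _) (by simpa using H 0 x le_rfl hx)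
  by_contra hne
  have hc : 0 < |d x - d 0| := by
    rcases abs_pos.mpr (sub_ne_zero.mpr hne) with h
    exact h
  set c := |d x - d 0|
  set M := x * (f x - f 0)
  obtain ⟨N, hNgt⟩ := exists_nat_gt (M / c)
  have hN0 : 0 < N := by
    by_contra h
    push_neg at h
    interval_cases N
    simp at hNgt
    nlinarith [div_nonneg hM hc.le]
  have h1 : c ≤ M / N := key N hN0
  have hN' : (0:ℝ) < N := by exact_mod_cast hN0
  have : M / c < N := hNgt
  have : M < N * c := by
    rwa [div_lt_iff₀ hc] at hNgt
  have : M / N < c := by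
    rw [div_lt_iff₀ hN']
    linarith [this]
  linarith

/-- for a monotone allocation rule, any two payment rules that make the
mechanism incentive compatible differ, for each agent `i` and each vector `b₋ᵢ` of other
bids, by a constant. -/
theorem payments_differ_by_constant (n : ℕ)
    (a p q : (Fin n → ℝ) → (Fin n → ℝ))
    (ha : ∀ b : Fin n → ℝ, (∀ j, 0 ≤ b j) → ∀ i, 0 ≤ a b i)
    (hp : ∀ b : Fin n → ℝ, (∀ j, 0 ≤ b j) → ∀ i, 0 ≤ p b i)
    (hq : ∀ b : Fin n → ℝ, (∀ j, 0 ≤ b j) → ∀ i, 0 ≤ q b i)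
    (hmono : ∀ i : Fin n, ∀ b : Fin n → ℝ, (∀ j, 0 ≤ b j) →
      ∀ x y : ℝ, 0 ≤ x → x ≤ y →
        a (Function.update b i x) i ≤ a (Function.update b i y) i)
    (hicp : ∀ i : Fin n, ∀ b : Fin n → ℝ, (∀ j, 0 ≤ b j) →
      ∀ v ≥ (0:ℝ), ∀ y ≥ (0:ℝ),
        v * a (Function.update b i v) i - p (Function.update b i v) i ≥
        v * a (Function.update b i y) i - p (Function.update b i y) i)
    (hicq : ∀ i : Fin n, ∀ b : Fin n → ℝ, (∀ j, 0 ≤ b j) →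
      ∀ v ≥ (0:ℝ), ∀ y ≥ (0:ℝ),
        v * a (Function.update b i v) i - q (Function.update b i v) i ≥
        v * a (Function.update b i y) i - q (Function.update b i y) i) :
    ∀ i : Fin n, ∀ b : Fin n → ℝ, (∀ j, 0 ≤ b j) →
      ∃ C : ℝ, ∀ x ≥ (0:ℝ),
        p (Function.update b i x) i - q (Function.update b i x) i = C := by
  intro i b hb
  set f : ℝ → ℝ := fun x => a (Function.update b i x) i with hf
  set d : ℝ → ℝ := fun x => p (Function.update b i x) i - q (Function.update b i x) i with hd
  have H : ∀ s t : ℝ, 0 ≤ s → s ≤ t → |d t - d s| ≤ (t - s) * (f t - f s) := by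
    intro s t hs hst
    have ht : 0 ≤ t := le_trans hs hst
    have h1 := hicp i b hb t ht s hs
    have h2 := hicp i b hb s hs t ht
    have h3 := hicq i b hb t ht s hs
    have h4 := hicq i b hb s hs t ht
    rw [abs_le]
    constructor <;> simp only [hf, hd] <;> nlinarith
  refine ⟨p (Function.update b i 0) i - q (Function.update b i 0) i, ?_⟩
  intro x hx
  exact aux_const f d H x hx
end
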